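/- Let G be a transitive subgroup of the imprimitive wreath product C_2 ≀ S_n of degree 2n. If G contains a transposition and G surjects onto S_n in the action on the n blocks, then G contains the full base group (C_2)^n, and hence G = C_2 ≀ S_n. -/

import Mathlib

/-!
A transposition preserving the blocks must swap the two points of one block. Conjugating it by
elements of `G` that realize the block transpositions `(i j)` yields every block swap, and the
block swaps generate the base group. Finally every element of `C_2 ≀ S_n` is an element of `G`
with the same action on the blocks times an element of the base group.
-/

/-- The imprimitive wreath product `C_2 ≀ S_n` of degree `2n`: the subgroup of all permutations
of `Fin n × Fin 2` preserving the partition into the `n` blocks `{i} × Fin 2` of size 2. -/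
def blockSubgroup (n : ℕ) : Subgroup (Equiv.Perm (Fin n × Fin 2)) where
  carrier := {g | ∃ τ : Equiv.Perm (Fin n), ∀ p, (g p).1 = τ p.1}
  one_mem' := ⟨1, fun _ => rfl⟩
  mul_mem' := by
    rintro a b ⟨τa, ha⟩ ⟨τb, hb⟩
    exact ⟨τa * τb, fun p => by simp [Equiv.Perm.mul_apply, ha, hb]⟩
  inv_mem' := by
    rintro g ⟨τ, h⟩
    refine ⟨τ⁻¹, fun p => ?_⟩
    have := h (g⁻¹ p)
    rw [show g (g⁻¹ p) = p from g.apply_symm_apply p] at this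
    rw [this, show τ⁻¹ (τ (g⁻¹ p).1) = (g⁻¹ p).1 from τ.symm_apply_apply _]

/-- The base group `(C_2)^n` of the wreath product `C_2 ≀ S_n`: permutations fixing each block. -/
def baseSubgroup (n : ℕ) : Subgroup (Equiv.Perm (Fin n × Fin 2)) where
  carrier := {g | ∀ p, (g p).1 = p.1}
  one_mem' := fun _ => rfl
  mul_mem' := by
    intro a b ha hb p
    rw [Equiv.Perm.mul_apply, ha, hb]
  inv_mem' := by
    intro g h p
    have := h (g⁻¹ p)
    simpa using this.symm

namespace Wreath

open Equiv

variable {n : ℕ}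

def blockSwap (i : Fin n) : Perm (Fin n × Fin 2) := swap (i, 0) (i, 1)

lemma swap_eq_blockSwap {a b : Fin n × Fin 2} (hblock : a.1 = b.1) (hne : a ≠ b) :
    swap a b = blockSwap a.1 := by
  obtain ⟨i, x⟩ := a
  obtain ⟨j, y⟩ := b
  obtain rfl : i = j := hblock
  have hxy : x ≠ y := fun h => hne (by rw [h])
  fin_cases x <;> fin_cases y <;> simp_all [blockSwap, swap_comm]

lemma fst_eq_of_swap_mem_blockSubgroup {a b : Fin n × Fin 2}
    (hmem : swap a b ∈ blockSubgroup n) : a.1 = b.1 := by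
  obtain ⟨τ, hτ⟩ := hmem
  by_contra hne
  -- the other point of the block of `a` is fixed, so `τ` fixes that block
  set a' : Fin n × Fin 2 := (a.1, a.2 + 1)
  have ha'a : a' ≠ a := fun h => by have := congrArg Prod.snd h; simp [a'] at this
  have ha'b : a' ≠ b := fun h => hne (by rw [← h])
  have hfix := hτ a'
  rw [swap_apply_of_ne_of_ne ha'a ha'b] at hfix
  have hmove := hτ a
  rw [swap_apply_left] at hmove
  exact hne (hfix.trans hmove.symm)

lemma exists_eq_blockSwap_of_isSwap {g : Perm (Fin n × Fin 2)} (hg : g.IsSwap)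
    (hmem : g ∈ blockSubgroup n) : ∃ i, g = blockSwap i := by
  obtain ⟨a, b, hab, rfl⟩ := hg
  exact ⟨a.1, swap_eq_blockSwap (fst_eq_of_swap_mem_blockSubgroup hmem) hab⟩

lemma conj_blockSwap {h : Perm (Fin n × Fin 2)} {τ : Perm (Fin n)}
    (hτ : ∀ p, (h p).1 = τ p.1) (i : Fin n) :
    h * blockSwap i * h⁻¹ = blockSwap (τ i) := by
  have hne : h (i, 0) ≠ h (i, 1) := fun heq => by
    have := congrArg Prod.snd (h.injective heq)
    simp at this
  rw [blockSwap, ← swap_apply_apply, swap_eq_blockSwap (by rw [hτ, hτ]) hne, hτ]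

lemma blockSwap_mem_baseSubgroup (i : Fin n) : blockSwap i ∈ baseSubgroup n := by
  intro p
  unfold blockSwap
  rcases eq_or_ne p (i, 0) with rfl | h0
  · simp
  rcases eq_or_ne p (i, 1) with rfl | h1
  · simp
  rw [swap_apply_of_ne_of_ne h0 h1]

lemma baseSubgroup_le_of_forall_blockSwap_mem {H : Subgroup (Perm (Fin n × Fin 2))}
    (hH : ∀ i, blockSwap i ∈ H) : baseSubgroup n ≤ H := by
  intro b hb
  induction hk : b.support.card using Nat.strong_induction_on generalizing b with
  | _ k ih =>
    by_cases hfix : ∀ x, b x = x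
    · rw [show b = 1 from Perm.ext hfix]
      exact one_mem H
    push Not at hfix
    obtain ⟨x, hx⟩ := hfix
    have hswap : swap x (b x) = blockSwap x.1 := swap_eq_blockSwap (hb x).symm (Ne.symm hx)
    have hbase : swap x (b x) * b ∈ baseSubgroup n :=
      mul_mem (hswap ▸ blockSwap_mem_baseSubgroup x.1) hb
    have hrest : swap x (b x) * b ∈ H := ih _ (hk ▸ Perm.card_support_swap_mul hx) hbase rfl
    rw [← swap_mul_self_mul x (b x) b]
    exact mul_mem (hswap ▸ hH x.1) hrest

lemma inv_mul_mem_baseSubgroup {g h : Perm (Fin n × Fin 2)} {τ : Perm (Fin n)}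
    (hg : ∀ p, (g p).1 = τ p.1) (hh : ∀ p, (h p).1 = τ p.1) :
    h⁻¹ * g ∈ baseSubgroup n := by
  intro p
  apply τ.injective
  rw [← hh, ← hg, ← Perm.mul_apply, mul_inv_cancel_left]

end Wreath

open Wreath in
theorem wreath_of_swap_and_blocks_surj_general (n : ℕ) (G : Subgroup (Equiv.Perm (Fin n × Fin 2)))
    (hle : G ≤ blockSubgroup n)
    (hswap : ∃ g ∈ G, Equiv.Perm.IsSwap g)
    (hsurj : ∀ τ : Equiv.Perm (Fin n), ∃ g ∈ G, ∀ p : Fin n × Fin 2, (g p).1 = τ p.1) :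
    baseSubgroup n ≤ G ∧ G = blockSubgroup n := by
  obtain ⟨s, hsG, hs⟩ := hswap
  obtain ⟨i, rfl⟩ := exists_eq_blockSwap_of_isSwap hs (hle hsG)
  have hblockSwap : ∀ j, blockSwap j ∈ G := fun j => by
    obtain ⟨h, hG, hτ⟩ := hsurj (Equiv.swap i j)
    have := conj_blockSwap hτ i
    rw [Equiv.swap_apply_left] at this
    exact this ▸ mul_mem (mul_mem hG hsG) (inv_mem hG)
  have hbase := baseSubgroup_le_of_forall_blockSwap_mem hblockSwap
  refine ⟨hbase, le_antisymm hle fun g ⟨τ, hg⟩ => ?_⟩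
  obtain ⟨h, hG, hh⟩ := hsurj τ
  rw [← mul_inv_cancel_left h g]
  exact mul_mem hG (hbase (inv_mul_mem_baseSubgroup hg hh))

/-- A transitive subgroup `G` of the imprimitive wreath product `C_2 ≀ S_n` of degree `2n`
which contains a transposition and surjects onto `S_n` in the action on the `n` blocks
contains the full base group `(C_2)^n`, and hence equals `C_2 ≀ S_n`. -/
theorem wreath_of_swap_and_blocks_surj (n : ℕ) (G : Subgroup (Equiv.Perm (Fin n × Fin 2)))
    (hle : G ≤ blockSubgroup n)
    (htrans : ∀ a b : Fin n × Fin 2, ∃ g ∈ G, g a = b)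
    (hswap : ∃ g ∈ G, Equiv.Perm.IsSwap g)
    (hsurj : ∀ τ : Equiv.Perm (Fin n), ∃ g ∈ G, ∀ p : Fin n × Fin 2, (g p).1 = τ p.1) :
    baseSubgroup n ≤ G ∧ G = blockSubgroup n :=
  wreath_of_swap_and_blocks_surj_general n G hle hswap hsurj
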